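/- For the ReLU activation f(x) = max(x,0) applied componentwise and a matrix A ∈ ℝ^{m×n} with m ≥ n such that every n×n submatrix of A (formed by any n rows) is invertible, if x, x' ∈ ℝ^n satisfy max(Ax,0) = max(Ax',0) and Ax has at least n positive entries, then x = x'. -/

import Mathlib

/-- Injectivity of a single ReLU layer under non-degeneracy: if every `n × n`
submatrix of `A` is invertible and `A x` has at least `n` positive entries,
then any `x'` with the same ReLU output equals `x`. -/
theorem relu_layer_injective (m n : ℕ) (hmn : m ≥ n)
    (A : Matrix (Fin m) (Fin n) ℝ)
    (hA : ∀ f : Fin n → Fin m, Function.Injective f → IsUnit (A.submatrix f id))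
    (x x' : Fin n → ℝ)
    (hsupp : n ≤ (Finset.univ.filter (fun i => 0 < A.mulVec x i)).card)
    (heq : ∀ i, max (A.mulVec x i) 0 = max (A.mulVec x' i) 0) :
    x = x' := by
  obtain ⟨S, hS, hcard⟩ := Finset.exists_subset_card_eq hsupp
  set f : Fin n → Fin m := fun i => (S.orderIsoOfFin hcard i : Fin m) with hf
  have hfinj : Function.Injective f := fun a b h => (S.orderIsoOfFin hcard).injective (Subtype.ext h)
  have hpos : ∀ i, 0 < A.mulVec x (f i) := fun i => by
    have := hS (S.orderIsoOfFin hcard i).2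
    simpa [hf] using (Finset.mem_filter.mp this).2
  have hrow : ∀ i, A.mulVec x (f i) = A.mulVec x' (f i) := by
    intro i
    have h := heq (f i)
    rw [max_eq_left (hpos i).le] at h
    rcases le_or_gt (A.mulVec x' (f i)) 0 with h'|h'
    · rw [max_eq_right h'] at h; exact absurd h (hpos i).ne'
    · rwa [max_eq_left h'.le] at h
  have := Matrix.mulVec_injective_iff_isUnit.mpr (hA f hfinj)
  apply this
  ext i
  simpa [Matrix.submatrix_mulVec_equiv, Matrix.mulVec, Matrix.submatrix_apply,
    dotProduct] using hrow i
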